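/- For the Finsler function F = (e^{−x2} y1 (y2³ + y3³ + y4³)^{1/3})^{1/2} on U = {(x,y) ∈ ℝ⁴×ℝ⁴ : y2 ≠ 0, y4 ≠ 0}, the Barthel connection has nonzero coefficients N^2_2 = −(4y2³ + y3³ + y4³)/(4y2²), N^2_3 = (3/4)y3²/y2, N^2_4 = (3/4)y4²/y2, N^3_2 = −(3/4)y3, N^3_3 = −(3/4)y2, N^4_2 = −(3/4)y4, N^4_4 = −(3/4)y2, and all others vanish. -/

import Mathlib

/-!
Write `F² = e^{-x₂} φ(y)`. Since the `x`-dependence is the factor `e^{-x₂}`, the numerator of the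
spray is `-y₂ ∂F²/∂y^k + δ^k_2 F²`. Two identities for the metric then give `G` without inverting
`g`: Euler's relation `g_{kj} y^j = ½ ∂F²/∂y^k` (as `F²` is 2-homogeneous in `y`), and an explicit
solution `V` of `g_{kj} V^j = δ_{k2}`, which is the column `g^{i2}`. Hence
`G = ¼ (-2 y₂ y + F² V)`, a rational function of `y` alone, and `N` is its Jacobian.
Lean's coordinates are 0-based: `y 1` is the paper's `y2`.
-/

open scoped BigOperators

/-- Partial derivative of `f` with respect to the `j`-th coordinate at `v`. -/
noncomputable def pd {n : ℕ} (f : (Fin n → ℝ) → ℝ) (j : Fin n) (v : Fin n → ℝ) : ℝ :=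
  deriv (fun t => f (Function.update v j t)) (v j)

/-- The square of the Finsler function: `F² = e^{−x2} y1 (y2³ + y3³ + y4³)^{1/3}`. -/
noncomputable def F2 (x y : Fin 4 → ℝ) : ℝ :=
  Real.exp (-(x 1)) * (y 0) * ((y 1) ^ 3 + (y 2) ^ 3 + (y 3) ^ 3) ^ ((1 : ℝ) / 3)

/-- The open set `U`: `y2 ≠ 0`, `y4 ≠ 0` (and the quantities under the roots positive). -/
def U (x y : Fin 4 → ℝ) : Prop :=
  y 1 ≠ 0 ∧ y 3 ≠ 0 ∧ 0 < y 0 ∧ 0 < (y 1) ^ 3 + (y 2) ^ 3 + (y 3) ^ 3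

open Filter Topology

section PartialDeriv

variable {n : ℕ} {f g : (Fin n → ℝ) → ℝ} {v : Fin n → ℝ}

theorem pd_eq_of_hasFDerivAt {f' : (Fin n → ℝ) →L[ℝ] ℝ} (h : HasFDerivAt f f' v) (j : Fin n) :
    pd f j v = f' (Pi.single j 1) := by
  rw [← Function.update_eq_self j v] at h
  exact (h.comp_hasDerivAt (v j) (hasDerivAt_update v j (v j))).deriv

theorem Filter.EventuallyEq.pd_eq (h : f =ᶠ[𝓝 v] g) (j : Fin n) : pd f j v = pd g j v := by
  have hline : Tendsto (Function.update v j) (𝓝 (v j)) (𝓝 v) := by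
    simpa using ((continuous_const.update j continuous_id : Continuous
      fun t : ℝ => Function.update v j t)).tendsto (v j)
  exact Filter.EventuallyEq.deriv_eq (hline.eventually h)

end PartialDeriv

theorem sum_mul_eq_of_sum_mul_eq_ite {ι R : Type*} [Fintype ι] [DecidableEq ι] [CommSemiring R]
    {A B : ι → ι → R} (hAB : ∀ i k, ∑ j, A i j * B j k = if i = k then 1 else 0) {v w : ι → R}
    (hBv : ∀ k, ∑ j, B k j * v j = w k) (i : ι) : ∑ k, A i k * w k = v i := by
  have hmul : Matrix.of A * Matrix.of B = 1 := by
    ext i k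
    simp [Matrix.mul_apply, Matrix.one_apply, hAB]
  have hw : (Matrix.of B).mulVec v = w := funext hBv
  have := congrFun (Matrix.mulVec_mulVec v (Matrix.of A) (Matrix.of B)) i
  rwa [hw, hmul, Matrix.one_mulVec] at this

def cubeSum (y : Fin 4 → ℝ) : ℝ := y 1 ^ 3 + y 2 ^ 3 + y 3 ^ 3

theorem isOpen_cubeSum_pos : IsOpen {y | 0 < cubeSum y} :=
  isOpen_lt continuous_const (by unfold cubeSum; fun_prop)

open ContinuousLinearMap in
theorem hasFDerivAt_cubeSum (y : Fin 4 → ℝ) :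
    HasFDerivAt cubeSum ((3 * y 1 ^ 2) • proj 1 + (3 * y 2 ^ 2) • proj 2
      + (3 * y 3 ^ 2) • proj 3 : (Fin 4 → ℝ) →L[ℝ] ℝ) y := by
  have hcube (i : Fin 4) : HasFDerivAt (fun y' : Fin 4 → ℝ => y' i ^ 3)
      ((3 * y i ^ 2) • proj i : (Fin 4 → ℝ) →L[ℝ] ℝ) y :=
    ((hasFDerivAt_apply (F' := fun _ => ℝ) i y).pow 3).congr_fderiv (by norm_num)
  exact ((hcube 1).add (hcube 2)).add (hcube 3)

noncomputable def dF2 (x y e : Fin 4 → ℝ) : ℝ :=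
  Real.exp (-(x 1)) * (cubeSum y ^ ((1 : ℝ) / 3) * e 0
    + y 0 * cubeSum y ^ ((1 : ℝ) / 3 - 1) * (y 1 ^ 2 * e 1 + y 2 ^ 2 * e 2 + y 3 ^ 2 * e 3))

theorem pd_F2 (x : Fin 4 → ℝ) {y : Fin 4 → ℝ} (hy : 0 < cubeSum y) (j : Fin 4) :
    pd (fun y' => F2 x y') j y = dF2 x y (Pi.single j 1) := by
  have h : HasFDerivAt (fun y' => Real.exp (-(x 1)) * y' 0 * cubeSum y' ^ ((1 : ℝ) / 3)) _ y :=
    ((hasFDerivAt_apply 0 y).const_mul (Real.exp (-(x 1)))).mul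
      ((hasFDerivAt_cubeSum y).rpow_const (p := 1 / 3) (Or.inl hy.ne'))
  refine (pd_eq_of_hasFDerivAt h j).trans ?_
  simp only [Fin.isValue, one_div, smul_add, add_apply, smul_apply, ContinuousLinearMap.proj_apply,
    smul_eq_mul, dF2]
  ring

noncomputable def d2F2 (x y e e' : Fin 4 → ℝ) : ℝ :=
  let w := fun v : Fin 4 → ℝ => y 1 ^ 2 * v 1 + y 2 ^ 2 * v 2 + y 3 ^ 2 * v 3
  Real.exp (-(x 1)) * (cubeSum y ^ ((1 : ℝ) / 3 - 1) * (e 0 * w e' + e' 0 * w e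
      + 2 * y 0 * (y 1 * e 1 * e' 1 + y 2 * e 2 * e' 2 + y 3 * e 3 * e' 3))
    - 2 * y 0 * cubeSum y ^ ((1 : ℝ) / 3 - 1 - 1) * w e * w e')

theorem pd_dF2 (x : Fin 4 → ℝ) {y : Fin 4 → ℝ} (hy : 0 < cubeSum y) (e : Fin 4 → ℝ) (i : Fin 4) :
    pd (fun y' => dF2 x y' e) i y = d2F2 x y (Pi.single i 1) e := by
  have hS := hasFDerivAt_cubeSum y
  have hsq (k : Fin 4) :=
    ((hasFDerivAt_apply (𝕜 := ℝ) (F' := fun _ : Fin 4 => ℝ) k y).pow 2).mul_const (e k)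
  have hw := ((hsq 1).add (hsq 2)).add (hsq 3)
  have h := (((hS.rpow_const (p := 1 / 3) (Or.inl hy.ne')).mul_const (e 0)).add
    (((hasFDerivAt_apply 0 y).mul (hS.rpow_const (p := 1 / 3 - 1) (Or.inl hy.ne'))).mul
      hw)).const_mul (Real.exp (-(x 1)))
  refine (pd_eq_of_hasFDerivAt h i).trans ?_
  simp only [Fin.isValue, one_div, smul_add, Pi.mul_apply, Nat.add_one_sub_one, pow_one, nsmul_eq_mul,
    Nat.cast_ofNat, Pi.add_apply, add_apply, smul_apply, ContinuousLinearMap.proj_apply, smul_eq_mul, d2F2]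
  ring

theorem pd_pd_F2 (x : Fin 4 → ℝ) {y : Fin 4 → ℝ} (hy : 0 < cubeSum y) (i j : Fin 4) :
    pd (fun y' => pd (fun y'' => F2 x y'') j y') i y
      = d2F2 x y (Pi.single i 1) (Pi.single j 1) := by
  have hloc : (fun y' => pd (fun y'' => F2 x y'') j y') =ᶠ[𝓝 y]
      fun y' => dF2 x y' (Pi.single j 1) :=
    (isOpen_cubeSum_pos.eventually_mem hy).mono fun y' hy' => pd_F2 x hy' j
  rw [hloc.pd_eq, pd_dF2 x hy]

theorem sum_d2F2_single_mul (x y e v : Fin 4 → ℝ) :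
    ∑ j, d2F2 x y e (Pi.single j 1) * v j = d2F2 x y e v := by
  simp only [d2F2, Fin.isValue, one_div, Fin.sum_univ_four, ne_eq, one_ne_zero, not_false_eq_true,
    Pi.single_eq_of_ne, mul_zero, Fin.reduceEq, add_zero, Pi.single_eq_same, one_mul, zero_add, sub_zero, mul_one,
    zero_ne_one, zero_mul]
  ring

theorem d2F2_apply_self (x : Fin 4 → ℝ) {y : Fin 4 → ℝ} (hy : 0 < cubeSum y) (e : Fin 4 → ℝ) :
    d2F2 x y e y = dF2 x y e := by
  simp only [d2F2, dF2, Real.rpow_sub_one hy.ne']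
  generalize cubeSum y ^ ((1 : ℝ) / 3) = P
  unfold cubeSum at hy ⊢
  field_simp
  ring

noncomputable def gInvCol (x y : Fin 4 → ℝ) : Fin 4 → ℝ :=
  let c := Real.exp (-(x 1)) * cubeSum y ^ ((1 : ℝ) / 3) * y 0 * y 1
  ![2 * y 0 * y 1 ^ 2 / c, (y 2 ^ 3 + y 3 ^ 3) / c, -(y 1 ^ 2 * y 2) / c, -(y 1 ^ 2 * y 3) / c]

theorem d2F2_apply_gInvCol (x : Fin 4 → ℝ) {y : Fin 4 → ℝ} (hy : 0 < cubeSum y) (h0 : y 0 ≠ 0)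
    (h1 : y 1 ≠ 0) (e : Fin 4 → ℝ) : d2F2 x y e (gInvCol x y) = 2 * e 1 := by
  have hP : cubeSum y ^ ((1 : ℝ) / 3) ≠ 0 := (Real.rpow_pos_of_pos hy _).ne'
  simp only [d2F2, gInvCol, Real.rpow_sub_one hy.ne']
  generalize cubeSum y ^ ((1 : ℝ) / 3) = P at hP
  simp only [Fin.isValue, Matrix.cons_val_one, Matrix.cons_val_zero, Matrix.cons_val]
  unfold cubeSum at hy ⊢
  field_simp
  ring

theorem pd_exp_neg_mul (c : ℝ) (x : Fin 4 → ℝ) (j : Fin 4) :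
    pd (fun x' => Real.exp (-(x' 1)) * c) j x
      = -(Pi.single j 1 : Fin 4 → ℝ) 1 * Real.exp (-(x 1)) * c := by
  have h : HasFDerivAt (fun x' : Fin 4 → ℝ => Real.exp (-(x' 1)) * c) _ x :=
    ((hasFDerivAt_apply 1 x).neg.exp).mul_const c
  rw [pd_eq_of_hasFDerivAt h]
  simp only [Fin.isValue, Pi.neg_apply, smul_neg, neg_apply, smul_apply, ContinuousLinearMap.proj_apply,
    smul_eq_mul, neg_mul, neg_inj]
  ring

theorem sum_mul_pd_pd_F2_sub_pd_F2 (x : Fin 4 → ℝ) {y : Fin 4 → ℝ} (hy : 0 < cubeSum y)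
    (k : Fin 4) :
    (∑ j, y j * pd (fun x' => pd (fun y' => F2 x' y') k y) j x) - pd (fun x' => F2 x' y) k x
      = -(y 1 * dF2 x y (Pi.single k 1)) + (Pi.single k 1 : Fin 4 → ℝ) 1 * F2 x y := by
  have hdF2 : (fun x' => pd (fun y' => F2 x' y') k y)
      = fun x' => Real.exp (-(x' 1)) * (dF2 x y (Pi.single k 1) / Real.exp (-(x 1))) := by
    ext x'
    simp [pd_F2 x' hy, dF2]
  have hF2 : (fun x' => F2 x' y)
      = fun x' => Real.exp (-(x' 1)) * (y 0 * cubeSum y ^ ((1 : ℝ) / 3)) :=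
    funext fun _ => mul_assoc _ _ _
  rw [hdF2, hF2]
  simp only [Fin.isValue, pd_exp_neg_mul, neg_mul, mul_neg, Finset.sum_neg_distrib, Fin.sum_univ_four, ne_eq,
    one_ne_zero, not_false_eq_true, Pi.single_eq_of_ne, zero_mul, mul_zero, Pi.single_eq_same, one_mul, zero_add,
    Fin.reduceEq, add_zero, cubeSum, one_div, sub_neg_eq_add, F2]
  field_simp

noncomputable def sprayCoeff (y : Fin 4 → ℝ) : Fin 4 → ℝ :=
  ![0, (y 2 ^ 3 + y 3 ^ 3 - 2 * y 1 ^ 3) / (4 * y 1), -(3 / 4) * (y 1 * y 2),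
    -(3 / 4) * (y 1 * y 3)]

theorem sprayCoeff_eq_gInvCol (x : Fin 4 → ℝ) {y : Fin 4 → ℝ} (hy : 0 < cubeSum y)
    (h0 : y 0 ≠ 0) (h1 : y 1 ≠ 0) (i : Fin 4) :
    sprayCoeff y i = (1 / 4) * (-(y 1 * (2 * y i)) + F2 x y * gInvCol x y i) := by
  have hP : cubeSum y ^ ((1 : ℝ) / 3) ≠ 0 := (Real.rpow_pos_of_pos hy _).ne'
  rw [show F2 x y = Real.exp (-(x 1)) * y 0 * cubeSum y ^ ((1 : ℝ) / 3) from rfl]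
  fin_cases i <;> simp [gInvCol, sprayCoeff] <;> field_simp <;> ring

theorem eq_sprayCoeff {x y : Fin 4 → ℝ} (hU : U x y) {g ginv : Fin 4 → Fin 4 → ℝ} {G : Fin 4 → ℝ}
    (hg : ∀ i j, g i j = (1 / 2) * pd (fun y' => pd (fun y'' => F2 x y'') j y') i y)
    (hginv : ∀ i k, (∑ j, ginv i j * g j k) = if i = k then (1 : ℝ) else 0)
    (hG : ∀ i, G i = (1 / 4) * ∑ k, ginv i k *
        ((∑ j, y j * pd (fun x' => pd (fun y' => F2 x' y') k y) j x)
          - pd (fun x' => F2 x' y) k x)) (i : Fin 4) :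
    G i = sprayCoeff y i := by
  obtain ⟨h1, -, h0, hy⟩ := hU
  change 0 < cubeSum y at hy
  have hg_mul (k : Fin 4) (v : Fin 4 → ℝ) :
      ∑ j, g k j * v j = (1 / 2) * d2F2 x y (Pi.single k 1) v := by
    simp only [hg, pd_pd_F2 x hy, ← sum_d2F2_single_mul x y _ v, Finset.mul_sum, mul_assoc]
  have hcol : ginv i 1 = gInvCol x y i := by
    have := sum_mul_eq_of_sum_mul_eq_ite hginv (v := gInvCol x y)
      (w := fun k => (Pi.single k 1 : Fin 4 → ℝ) 1)
      (fun k => by rw [hg_mul, d2F2_apply_gInvCol x hy h0.ne' h1]; ring) i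
    simpa [Pi.single_apply] using this
  have heuler : ∑ k, ginv i k * ((1 / 2) * dF2 x y (Pi.single k 1)) = y i :=
    sum_mul_eq_of_sum_mul_eq_ite hginv (fun k => by rw [hg_mul, d2F2_apply_self x hy]) i
  rw [hG, sprayCoeff_eq_gInvCol x hy h0.ne' h1, ← heuler, ← hcol]
  simp only [sum_mul_pd_pd_F2_sub_pd_F2 x hy]
  simp only [one_div, Fin.isValue, Fin.sum_univ_four, ne_eq, one_ne_zero, not_false_eq_true, Pi.single_eq_of_ne,
    zero_mul, add_zero, mul_neg, Pi.single_eq_same, one_mul, Fin.reduceEq, mul_eq_mul_left_iff, inv_eq_zero,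
    OfNat.ofNat_ne_zero, or_false]
  ring

theorem isOpen_setOf_U (x : Fin 4 → ℝ) : IsOpen {y | U x y} :=
  (isOpen_ne_fun (continuous_apply 1) continuous_const).and <|
    (isOpen_ne_fun (continuous_apply 3) continuous_const).and <|
    (isOpen_lt continuous_const (continuous_apply 0)).and
      (isOpen_lt continuous_const (by fun_prop))

noncomputable def barthelCoeff (y : Fin 4 → ℝ) : Matrix (Fin 4) (Fin 4) ℝ :=
  !![0, 0, 0, 0;
    0, -(4 * (y 1) ^ 3 + (y 2) ^ 3 + (y 3) ^ 3) / (4 * (y 1) ^ 2),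
      (3 / 4) * (y 2) ^ 2 / (y 1), (3 / 4) * (y 3) ^ 2 / (y 1);
    0, -(3 / 4) * (y 2), -(3 / 4) * (y 1), 0;
    0, -(3 / 4) * (y 3), 0, -(3 / 4) * (y 1)]

theorem pd_sprayCoeff {y : Fin 4 → ℝ} (h1 : y 1 ≠ 0) (i j : Fin 4) :
    pd (fun y' => sprayCoeff y' i) j y = barthelCoeff y i j := by
  have hc (k : Fin 4) := hasFDerivAt_apply (𝕜 := ℝ) (F' := fun _ : Fin 4 => ℝ) k y
  fin_cases i
  · refine (pd_eq_of_hasFDerivAt (hasFDerivAt_const (0 : ℝ) y) j).trans ?_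
    fin_cases j <;> rfl
  · have h := ((((hc 2).pow 3).add ((hc 3).pow 3)).sub (((hc 1).pow 3).const_mul 2)).mul
      ((hasDerivAt_inv (mul_ne_zero four_ne_zero h1)).comp_hasFDerivAt y ((hc 1).const_mul 4))
    refine (pd_eq_of_hasFDerivAt h j).trans ?_
    fin_cases j <;> simp [barthelCoeff] <;> field_simp
    ring
  · have h := ((hc 1).mul (hc 2)).const_mul (-(3 / 4) : ℝ)
    refine (pd_eq_of_hasFDerivAt h j).trans ?_
    fin_cases j <;> simp [barthelCoeff]
  · have h := ((hc 1).mul (hc 3)).const_mul (-(3 / 4) : ℝ)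
    refine (pd_eq_of_hasFDerivAt h j).trans ?_
    fin_cases j <;> simp [barthelCoeff]

/-- the Barthel connection of `F² = e^{−x2} y1 (y2³+y3³+y4³)^{1/3}` has nonzero
coefficients `N²_2 = −(4y2³+y3³+y4³)/(4y2²)`, `N²_3 = (3/4)y3²/y2`, `N²_4 = (3/4)y4²/y2`,
`N³_2 = −(3/4)y3`, `N³_3 = −(3/4)y2`, `N⁴_2 = −(3/4)y4`, `N⁴_4 = −(3/4)y2`,
and all others vanish. -/
theorem statement9
    (g ginv : (Fin 4 → ℝ) → (Fin 4 → ℝ) → Fin 4 → Fin 4 → ℝ)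
    (G : (Fin 4 → ℝ) → (Fin 4 → ℝ) → Fin 4 → ℝ)
    (N : (Fin 4 → ℝ) → (Fin 4 → ℝ) → Fin 4 → Fin 4 → ℝ)
    (hg : ∀ x y, U x y → ∀ i j,
      g x y i j = (1 / 2) * pd (fun y' => pd (fun y'' => F2 x y'') j y') i y)
    (hginv : ∀ x y, U x y → ∀ i k,
      (∑ j, ginv x y i j * g x y j k) = if i = k then (1 : ℝ) else 0)
    (hG : ∀ x y, U x y → ∀ i,
      G x y i = (1 / 4) * ∑ k, ginv x y i k *
        ((∑ j, y j * pd (fun x' => pd (fun y' => F2 x' y') k y) j x)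
          - pd (fun x' => F2 x' y) k x))
    (hN : ∀ x y, U x y → ∀ i j, N x y i j = pd (fun y' => G x y' i) j y) :
    ∀ x y, U x y → ∀ i j,
      N x y i j =
        (!![0, 0, 0, 0;
            0, -(4 * (y 1) ^ 3 + (y 2) ^ 3 + (y 3) ^ 3) / (4 * (y 1) ^ 2),
              (3 / 4) * (y 2) ^ 2 / (y 1), (3 / 4) * (y 3) ^ 2 / (y 1);
            0, -(3 / 4) * (y 2), -(3 / 4) * (y 1), 0;
            0, -(3 / 4) * (y 3), 0, -(3 / 4) * (y 1)] : Matrix (Fin 4) (Fin 4) ℝ) i j := by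
  intro x y hU i j
  have hspray : (fun y' => G x y' i) =ᶠ[𝓝 y] fun y' => sprayCoeff y' i :=
    ((isOpen_setOf_U x).eventually_mem hU).mono fun y' hy' =>
      eq_sprayCoeff hy' (hg x y' hy') (hginv x y' hy') (hG x y' hy') i
  rw [hN x y hU, hspray.pd_eq, pd_sprayCoeff hU.1]
  rfl
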